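/- In the two-stage adversarial training with infinitely many generated data, if the known noise variance σ² is replaced by an estimate σ̂² > 0, then the second-stage estimator equals θ̂₀(λ)/(1+α) where the stationary parameter α = α_ε(λ) ≥ 0 solves α + ε c₀ α ‖θ̂₀(λ)‖₂ / √( ‖θ̂₀(λ)‖₂² α² + σ̂² (1+α)² ) = ε c₀ √( ‖θ̂₀(λ)‖₂² α² + σ̂² (1+α)² ) / ‖θ̂₀(λ)‖₂ + ε², i.e. the same fixed-point equation with σ² replaced by σ̂². -/

import Mathlib

/-!
With `c₀ = √(2/π) ≤ 1` the risk is `(√(‖θ - θ̂‖² + σ̂²) + c₀ε‖θ‖)² + (1 - c₀²)ε²‖θ‖²`, built from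
the convex functions `θ ↦ √(‖θ - θ̂‖² + σ̂²)` and `θ ↦ ‖θ‖`. Each of them lies above its tangent
plane (Cauchy–Schwarz in `E × ℝ`), hence so does the risk, and any point where its gradient
vanishes is a global minimiser. At `θ̂/(1+α)` the gradient is a multiple of `θ̂`, and that multiple
vanishes exactly when `α` solves the fixed-point equation.
-/

open scoped RealInnerProductSpace

/-- The population adversarial risk of `θ` when pseudo-responses are generated from the base
model `b` with (estimated) noise variance `v` and standard Gaussian features
(`c₀ = √(2/π)`). -/
noncomputable def advRisk {d : ℕ} (ε v : ℝ) (b θ : EuclideanSpace ℝ (Fin d)) : ℝ :=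
  ‖θ - b‖ ^ 2 + v + 2 * Real.sqrt (2 / Real.pi) * ε * ‖θ‖ *
    Real.sqrt (‖θ - b‖ ^ 2 + v) + ε ^ 2 * ‖θ‖ ^ 2

section InnerProductSpace

variable {E : Type*} [NormedAddCommGroup E] [InnerProductSpace ℝ E]

/-- Cauchy–Schwarz for the vectors `(x, √v)` and `(y, √v)` of `E × ℝ`. -/
theorem real_inner_add_le_sqrt_mul_sqrt (x y : E) {v : ℝ} (hv : 0 ≤ v) :
    ⟪x, y⟫ + v ≤ √(‖x‖ ^ 2 + v) * √(‖y‖ ^ 2 + v) := by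
  calc ⟪x, y⟫ + v ≤ ‖x‖ * ‖y‖ + v := by gcongr; exact real_inner_le_norm x y
    _ ≤ √((‖x‖ ^ 2 + v) * (‖y‖ ^ 2 + v)) := by
      rw [Real.le_sqrt (by positivity) (by positivity)]
      nlinarith [mul_nonneg hv (sq_nonneg (‖x‖ - ‖y‖))]
    _ = √(‖x‖ ^ 2 + v) * √(‖y‖ ^ 2 + v) := Real.sqrt_mul (by positivity) _

theorem sqrt_norm_sq_add_tangent_le (x₀ x : E) {v : ℝ} (hv : 0 ≤ v) :
    √(‖x₀‖ ^ 2 + v) + (√(‖x₀‖ ^ 2 + v))⁻¹ * ⟪x₀, x - x₀⟫ ≤ √(‖x‖ ^ 2 + v) := by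
  have hs₀ : √(‖x₀‖ ^ 2 + v) ^ 2 = ‖x₀‖ ^ 2 + v := Real.sq_sqrt (by positivity)
  have hcs := real_inner_add_le_sqrt_mul_sqrt x₀ x hv
  rw [inner_sub_right, real_inner_self_eq_norm_sq]
  rcases (Real.sqrt_nonneg (‖x₀‖ ^ 2 + v)).eq_or_lt with h | h
  · rw [← h]; simp
  · have : (√(‖x₀‖ ^ 2 + v))⁻¹ * (⟪x₀, x⟫ - ‖x₀‖ ^ 2) ≤ √(‖x‖ ^ 2 + v) - √(‖x₀‖ ^ 2 + v) := by
      rw [inv_mul_le_iff₀ h]; nlinarith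
    linarith

theorem norm_tangent_le (x₀ x : E) : ‖x₀‖ + ‖x₀‖⁻¹ * ⟪x₀, x - x₀⟫ ≤ ‖x‖ := by
  simpa [Real.sqrt_sq (norm_nonneg _)] using sqrt_norm_sq_add_tangent_le x₀ x le_rfl

noncomputable def convexRisk (p q v : ℝ) (b θ : E) : ℝ :=
  (√(‖θ - b‖ ^ 2 + v) + p * ‖θ‖) ^ 2 + q * ‖θ‖ ^ 2

/-- Half a subgradient of `convexRisk p q v b` at `θ₀`. Through `0⁻¹ = 0` it is one also where the
risk is not differentiable (`θ₀ = 0`, or `θ₀ = b` and `v = 0`). -/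
noncomputable def convexRiskHalfSubgrad (p q v : ℝ) (b θ₀ : E) : E :=
  (√(‖θ₀ - b‖ ^ 2 + v) + p * ‖θ₀‖) •
      ((√(‖θ₀ - b‖ ^ 2 + v))⁻¹ • (θ₀ - b) + (p * ‖θ₀‖⁻¹) • θ₀) + q • θ₀

variable {p q v : ℝ}

theorem convexRisk_add_inner_halfSubgrad_le (hp : 0 ≤ p) (hq : 0 ≤ q) (hv : 0 ≤ v)
    (b θ₀ θ : E) :
    convexRisk p q v b θ₀ + 2 * ⟪convexRiskHalfSubgrad p q v b θ₀, θ - θ₀⟫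
      ≤ convexRisk p q v b θ := by
  set X₀ := √(‖θ₀ - b‖ ^ 2 + v)
  set Y₀ := X₀ + p * ‖θ₀‖
  set Y := √(‖θ - b‖ ^ 2 + v) + p * ‖θ‖
  have hX := sqrt_norm_sq_add_tangent_le (θ₀ - b) (θ - b) hv
  rw [sub_sub_sub_cancel_right] at hX
  have hn := norm_tangent_le θ₀ θ
  have hY : X₀⁻¹ * ⟪θ₀ - b, θ - θ₀⟫ + p * ‖θ₀‖⁻¹ * ⟪θ₀, θ - θ₀⟫ ≤ Y - Y₀ := by
    nlinarith [mul_le_mul_of_nonneg_left hn hp]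
  have hY₀ : 0 ≤ Y₀ := by positivity
  have hnsq : ‖θ₀‖ ^ 2 + 2 * ⟪θ₀, θ - θ₀⟫ ≤ ‖θ‖ ^ 2 := by
    rw [inner_sub_right, real_inner_self_eq_norm_sq]
    nlinarith [real_inner_le_norm θ₀ θ, sq_nonneg (‖θ‖ - ‖θ₀‖)]
  simp only [convexRisk, convexRiskHalfSubgrad, inner_add_left, real_inner_smul_left]
  nlinarith [mul_le_mul_of_nonneg_left hY hY₀, mul_le_mul_of_nonneg_left hnsq hq,
    sq_nonneg (Y - Y₀)]

theorem convexRisk_le_of_halfSubgrad_eq_zero (hp : 0 ≤ p) (hq : 0 ≤ q) (hv : 0 ≤ v)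
    {b θ₀ : E} (h : convexRiskHalfSubgrad p q v b θ₀ = 0) (θ : E) :
    convexRisk p q v b θ₀ ≤ convexRisk p q v b θ := by
  simpa [h] using convexRisk_add_inner_halfSubgrad_le hp hq hv b θ₀ θ

theorem convexRiskHalfSubgrad_one_div_one_add_smul_self_eq_zero {b : E} (hb : b ≠ 0) {α S : ℝ}
    (hα : 0 ≤ α) (hS : 0 < S) (hS_sq : S ^ 2 = ‖b‖ ^ 2 * α ^ 2 + v * (1 + α) ^ 2)
    (h : (S + p * ‖b‖) * (p * S - α * ‖b‖) + q * ‖b‖ * S = 0) :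
    convexRiskHalfSubgrad p q v b ((1 / (1 + α)) • b) = 0 := by
  have hα₁ : 0 < 1 + α := by linarith
  have hb₀ : 0 < ‖b‖ := norm_pos_iff.mpr hb
  have hsub : (1 / (1 + α)) • b - b = (-(α / (1 + α))) • b := by
    have : -(α / (1 + α)) = 1 / (1 + α) - 1 := by field_simp; ring
    rw [this, sub_smul, one_smul]
  have hnorm : ‖(1 / (1 + α)) • b‖ = ‖b‖ / (1 + α) := by
    rw [norm_smul, Real.norm_of_nonneg (by positivity)]; ring
  have hX₀ : √(‖(1 / (1 + α)) • b - b‖ ^ 2 + v) = S / (1 + α) := by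
    rw [hsub, norm_smul, Real.norm_eq_abs, abs_neg, abs_of_nonneg (by positivity),
      ← Real.sqrt_sq (by positivity : 0 ≤ S / (1 + α))]
    congr 1
    field_simp
    linear_combination -hS_sq
  rw [convexRiskHalfSubgrad, hX₀, hnorm, hsub, smul_smul, smul_smul, ← add_smul, smul_smul,
    smul_smul, ← add_smul, smul_eq_zero]
  left
  field_simp
  linear_combination h

end InnerProductSpace

theorem advRisk_eq_convexRisk {d : ℕ} (ε : ℝ) {v : ℝ} (hv : 0 ≤ v)
    (b θ : EuclideanSpace ℝ (Fin d)) :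
    advRisk ε v b θ = convexRisk (√(2 / Real.pi) * ε) ((1 - 2 / Real.pi) * ε ^ 2) v b θ := by
  have hX : √(‖θ - b‖ ^ 2 + v) ^ 2 = ‖θ - b‖ ^ 2 + v := Real.sq_sqrt (by positivity)
  have hc : √(2 / Real.pi) ^ 2 = 2 / Real.pi := Real.sq_sqrt (by positivity [Real.pi_pos])
  rw [advRisk, convexRisk]
  linear_combination -hX - ε ^ 2 * ‖θ‖ ^ 2 * hc

/-- In the two-stage adversarial training with infinitely many generated
data, if the known noise variance `σ²` is replaced by an estimate `σ̂² > 0`, the second-stage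
estimator equals `θ̂₀(λ)/(1+α)`, where `α ≥ 0` solves the same fixed-point equation with `σ²`
replaced by `σ̂²`:
`α + εc₀α‖θ̂₀‖/√(‖θ̂₀‖²α² + σ̂²(1+α)²) = εc₀√(‖θ̂₀‖²α² + σ̂²(1+α)²)/‖θ̂₀‖ + ε²`. -/
theorem two_stage_estimated_variance_minimizer (d : ℕ) (θhat : EuclideanSpace ℝ (Fin d))
    (hθhat : θhat ≠ 0) (ε σhat2 α : ℝ) (hε : 0 < ε) (hσhat2 : 0 < σhat2) (hα : 0 ≤ α)
    (hfix : α + ε * Real.sqrt (2 / Real.pi) * (α * ‖θhat‖)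
          / Real.sqrt (‖θhat‖ ^ 2 * α ^ 2 + σhat2 * (1 + α) ^ 2)
      = ε * Real.sqrt (2 / Real.pi)
          * Real.sqrt (‖θhat‖ ^ 2 * α ^ 2 + σhat2 * (1 + α) ^ 2) / ‖θhat‖ + ε ^ 2) :
    ∀ θ : EuclideanSpace ℝ (Fin d),
      advRisk ε σhat2 θhat ((1 / (1 + α)) • θhat) ≤ advRisk ε σhat2 θhat θ := by
  intro θ
  set c := √(2 / Real.pi)
  set S := √(‖θhat‖ ^ 2 * α ^ 2 + σhat2 * (1 + α) ^ 2)
  have hS : 0 < S := Real.sqrt_pos.mpr (by positivity)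
  have hc : c ^ 2 = 2 / Real.pi := Real.sq_sqrt (by positivity [Real.pi_pos])
  have hq : 0 ≤ (1 - 2 / Real.pi) * ε ^ 2 := by
    have : 2 / Real.pi ≤ 1 := (div_le_one Real.pi_pos).mpr (by linarith [Real.pi_gt_three])
    exact mul_nonneg (sub_nonneg.mpr this) (sq_nonneg ε)
  have hstat : (S + c * ε * ‖θhat‖) * (c * ε * S - α * ‖θhat‖)
      + (1 - 2 / Real.pi) * ε ^ 2 * ‖θhat‖ * S = 0 := by
    field_simp at hfix
    linear_combination -hfix + ε ^ 2 * ‖θhat‖ * S * hc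
  rw [advRisk_eq_convexRisk ε hσhat2.le, advRisk_eq_convexRisk ε hσhat2.le]
  exact convexRisk_le_of_halfSubgrad_eq_zero (by positivity) hq hσhat2.le
    (convexRiskHalfSubgrad_one_div_one_add_smul_self_eq_zero hθhat hα hS
      (Real.sq_sqrt (by positivity)) hstat) θ
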